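/- arXiv:2012.02549 — 2 statements merged into one kernel-verified Lean document; each statement's English description precedes it below -/
import Mathlib

section
/- Let d ≥ 2 and m ≥ 3 be integers. Then every polynomial Q ∈ ℂ[x,y,z,w] that is weighted homogeneous of weighted degree 2·m·d − m − 3 (with weights 1,1,1,m on x,y,z,w) is congruent, modulo the ideal generated by w^{d−1}, to a finite sum Σ_j f_j·h_j where each f_j ∈ ℂ[x,y,z] is homogeneous of usual degree m·d and each h_j ∈ ℂ[x,y,z,w] is weighted homogeneous of weighted degree m·d − m − 3. -/
open MvPolynomial

noncomputable section

/-- The polynomial ring ℂ[x,y,z,w], with x,y,z,w the variables indexed 0,1,2,3. -/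
abbrev S := MvPolynomial (Fin 4) ℂ

/-- The variable `w`. -/
def w : S := X 3

/-- `noW p` means `p` lies in the subring ℂ[x,y,z], i.e. does not involve `w`. -/
def noW (p : S) : Prop := ∀ μ ∈ p.support, μ 3 = 0

/-- The weights 1,1,1,m on x,y,z,w. -/
def wt (m : ℕ) : Fin 4 → ℕ := fun i => if i = 3 then m else 1

lemma weight_wt (m : ℕ) (μ : Fin 4 →₀ ℕ) :
    Finsupp.weight (wt m) μ = μ 0 + μ 1 + μ 2 + m * μ 3 := by
  rw [Finsupp.weight_apply, Finsupp.sum_fintype]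
  · simp [Fin.sum_univ_four, wt, mul_comm]
  · intro i; simp

lemma degree_eq (ν : Fin 4 →₀ ℕ) :
    Finsupp.degree ν = ν 0 + ν 1 + ν 2 + ν 3 := by
  rw [Finsupp.degree_eq_weight_one, Finsupp.weight_apply, Finsupp.sum_fintype]
  · simp [Fin.sum_univ_four]
  · intro i; simp

def Good (d m : ℕ) (Q : S) : Prop :=
  ∃ (N : ℕ) (F H : Fin N → S),
    (∀ j, noW (F j) ∧ (F j).IsHomogeneous (m * d)) ∧
    (∀ j, IsWeightedHomogeneous (wt m) (H j) (m * d - m - 3)) ∧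
    Q - ∑ j : Fin N, F j * H j ∈ Ideal.span {w ^ (d - 1)}


lemma good_zero (d m : ℕ) : Good d m 0 :=
  ⟨0, Fin.elim0, Fin.elim0, fun j => j.elim0, fun j => j.elim0, by simp⟩

lemma good_add (d m : ℕ) {p q : S} (hp : Good d m p) (hq : Good d m q) :
    Good d m (p + q) := by
  obtain ⟨N1, F1, H1, hF1, hH1, hmem1⟩ := hp
  obtain ⟨N2, F2, H2, hF2, hH2, hmem2⟩ := hq
  refine ⟨N1 + N2, Fin.append F1 F2, Fin.append H1 H2, ?_, ?_, ?_⟩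
  · intro j
    refine Fin.addCases (fun i => ?_) (fun i => ?_) j
    · rw [Fin.append_left]; exact hF1 _
    · rw [Fin.append_right]; exact hF2 _
  · intro j
    refine Fin.addCases (fun i => ?_) (fun i => ?_) j
    · rw [Fin.append_left]; exact hH1 _
    · rw [Fin.append_right]; exact hH2 _
  · have : ∑ j : Fin (N1 + N2), Fin.append F1 F2 j * Fin.append H1 H2 j =
        (∑ j : Fin N1, F1 j * H1 j) + ∑ j : Fin N2, F2 j * H2 j := by
      rw [Fin.sum_univ_add]
      simp [Fin.append_left, Fin.append_right]
    rw [this]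
    have : p + q - ((∑ j : Fin N1, F1 j * H1 j) + ∑ j : Fin N2, F2 j * H2 j)
        = (p - ∑ j : Fin N1, F1 j * H1 j) + (q - ∑ j : Fin N2, F2 j * H2 j) := by ring
    rw [this]
    exact Ideal.add_mem _ hmem1 hmem2

lemma good_monomial (d m : ℕ) (hd : 2 ≤ d) (hm : 3 ≤ m)
    (μ : Fin 4 →₀ ℕ) (c : ℂ)
    (hμ : Finsupp.weight (wt m) μ = 2 * m * d - m - 3) :
    Good d m (monomial μ c) := by
  by_cases he : d - 1 ≤ μ 3
  · refine ⟨0, Fin.elim0, Fin.elim0, fun j => j.elim0, fun j => j.elim0, ?_⟩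
    rw [Finset.univ_eq_empty, Finset.sum_empty, sub_zero, Ideal.mem_span_singleton]
    refine ⟨monomial (μ - Finsupp.single 3 (d - 1)) c, ?_⟩
    have hle : Finsupp.single 3 (d - 1) ≤ μ := by
      rw [Finsupp.single_le_iff]; exact he
    rw [w, X_pow_eq_monomial, monomial_mul, one_mul, add_tsub_cancel_of_le hle]
  · -- μ 3 ≤ d - 2
    rw [weight_wt] at hμ
    have h2 : 2 * m * d = 2 * (m * d) := by ring
    have hA : m * μ 3 + 2 * m ≤ m * d := by
      calc m * μ 3 + 2 * m = m * (μ 3 + 2) := by ring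
        _ ≤ m * d := Nat.mul_le_mul_left m (by omega)
    set B := m * d with hB
    set a' := min (μ 0) B with ha'
    set b' := min (μ 1) (B - a') with hb'
    set c' := B - a' - b' with hc'
    have hs : B ≤ μ 0 + μ 1 + μ 2 := by omega
    set ν : Fin 4 →₀ ℕ :=
      Finsupp.single 0 a' + Finsupp.single 1 b' + Finsupp.single 2 c' with hν
    have hν0 : ν 0 = a' := by simp [hν, Finsupp.single_apply]
    have hν1 : ν 1 = b' := by simp [hν, Finsupp.single_apply]
    have hν2 : ν 2 = c' := by simp [hν, Finsupp.single_apply]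
    have hν3 : ν 3 = 0 := by simp [hν, Finsupp.single_apply]
    have hle : ν ≤ μ := by
      intro i
      fin_cases i
      · show ν 0 ≤ μ 0; omega
      · show ν 1 ≤ μ 1; omega
      · show ν 2 ≤ μ 2; omega
      · show ν 3 ≤ μ 3; omega
    have hdeg : Finsupp.degree ν = B := by
      rw [degree_eq, hν0, hν1, hν2, hν3]; omega
    have hwν : Finsupp.weight (wt m) ν = B := by
      rw [weight_wt, hν0, hν1, hν2, hν3]; omega
    have hwsub : Finsupp.weight (wt m) (μ - ν) = B - m - 3 := by
      rw [weight_wt, Finsupp.tsub_apply, Finsupp.tsub_apply, Finsupp.tsub_apply,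
        Finsupp.tsub_apply, hν0, hν1, hν2, hν3, Nat.sub_zero]
      omega
    refine ⟨1, fun _ => monomial ν 1, fun _ => monomial (μ - ν) c, ?_, ?_, ?_⟩
    · intro j
      constructor
      · intro τ hτ
        rw [support_monomial] at hτ
        simp only [if_neg (one_ne_zero (α := ℂ)), Finset.mem_singleton] at hτ
        rw [hτ, hν3]
      · exact isHomogeneous_monomial 1 hdeg
    · intro j
      exact isWeightedHomogeneous_monomial (wt m) _ c hwsub
    · rw [Fin.sum_univ_one, monomial_mul, one_mul, add_tsub_cancel_of_le hle,
        sub_self]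
      exact Ideal.zero_mem _


/-- for d ≥ 2 and m ≥ 3, every Q weighted homogeneous of weighted
degree 2md − m − 3 is congruent mod (w^{d−1}) to a finite sum Σⱼ fⱼ·hⱼ with
fⱼ ∈ ℂ[x,y,z] homogeneous of degree m·d and hⱼ weighted homogeneous of weighted
degree md − m − 3. -/
theorem statement4 (d m : ℕ) (hd : 2 ≤ d) (hm : 3 ≤ m)
    (Q : S) (hQ : IsWeightedHomogeneous (wt m) Q (2 * m * d - m - 3)) :
    ∃ (N : ℕ) (F H : Fin N → S),
      (∀ j, noW (F j) ∧ (F j).IsHomogeneous (m * d)) ∧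
      (∀ j, IsWeightedHomogeneous (wt m) (H j) (m * d - m - 3)) ∧
      Q - ∑ j : Fin N, F j * H j ∈ Ideal.span {w ^ (d - 1)} := by
  have : Good d m Q := by
    rw [← Q.support_sum_monomial_coeff]
    apply Finset.sum_induction _ (Good d m) (fun a b ha hb => good_add d m ha hb)
      (good_zero d m)
    intro μ hμ
    exact good_monomial d m hd hm μ _ (hQ (mem_support_iff.1 hμ))
  exact this
end
end

section
/- Let d ≥ 1 and m ≥ 1 be integers, let f ∈ ℂ[x,y,z] be homogeneous of degree m·d, and let k be an integer with 0 ≤ k < m. Then the ℂ-linear map sending a homogeneous polynomial g ∈ ℂ[x,y,z] of usual degree k to its residue class in ℂ[x,y,z,w]/(w^d + f) is injective, and for every P ∈ ℂ[x,y,z,w] that is weighted homogeneous of weighted degree k (with weights 1,1,1,m on x,y,z,w) there exists a homogeneous g ∈ ℂ[x,y,z] of usual degree k whose residue class equals that of P. -/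
open MvPolynomial

noncomputable section

/-! The whole content is a degree count: `w ^ d + f` is weighted homogeneous of weighted degree
`m * d`, so every nonzero multiple of it only has weighted components of degree `≥ m * d > k`;
and a monomial of weighted degree `k < m` cannot contain `w`, so on such monomials the weighted
degree is the usual degree. -/

namespace MvPolynomial

variable {σ R M : Type*} [CommSemiring R] [AddCommMonoid M] [PartialOrder M]
  [CanonicallyOrderedAdd M] {w : σ → M} {p r : MvPolynomial σ R} {k n : M}

theorem IsWeightedHomogeneous.weightedHomogeneousComponent_mul_eq_zero_of_lt
    (hr : IsWeightedHomogeneous w r n) (hk : k < n) (q : MvPolynomial σ R) :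
    weightedHomogeneousComponent w k (r * q) = 0 := by
  classical
  ext μ
  rw [coeff_weightedHomogeneousComponent, coeff_zero]
  split_ifs with hμ
  · rw [coeff_mul]
    refine Finset.sum_eq_zero fun ab hab => ?_
    by_cases hra : coeff ab.1 r = 0
    · rw [hra, zero_mul]
    · have hle : n ≤ k := by
        rw [← hμ, ← Finset.HasAntidiagonal.mem_antidiagonal.mp hab, map_add, hr hra]
        exact le_self_add
      exact absurd hk (not_lt_of_ge hle)
  · rfl

theorem IsWeightedHomogeneous.eq_zero_of_mem_span_singleton
    (hp : IsWeightedHomogeneous w p k) (hr : IsWeightedHomogeneous w r n) (hk : k < n)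
    (h : p ∈ Ideal.span {r}) : p = 0 := by
  obtain ⟨q, rfl⟩ := Ideal.mem_span_singleton.mp h
  rw [← hp.weightedHomogeneousComponent_same]
  exact hr.weightedHomogeneousComponent_mul_eq_zero_of_lt hk q

end MvPolynomial

lemma weight_wt_apply (m : ℕ) (μ : Fin 4 →₀ ℕ) :
    Finsupp.weight (wt m) μ = μ 0 + μ 1 + μ 2 + μ 3 * m := by
  simp [Finsupp.weight_apply, Finsupp.sum_fintype, Fin.sum_univ_four, wt]

lemma weight_one_apply (μ : Fin 4 →₀ ℕ) :
    Finsupp.weight (1 : Fin 4 → ℕ) μ = μ 0 + μ 1 + μ 2 + μ 3 := by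
  simp [Finsupp.weight_apply, Finsupp.sum_fintype, Fin.sum_univ_four]

lemma weight_wt_eq_weight_one {m : ℕ} {μ : Fin 4 →₀ ℕ} (hμ : μ 3 = 0) :
    Finsupp.weight (wt m) μ = Finsupp.weight 1 μ := by
  rw [weight_wt_apply, weight_one_apply, hμ, zero_mul]

lemma noW.isWeightedHomogeneous_wt_iff {p : S} (hp : noW p) {m k : ℕ} :
    IsWeightedHomogeneous (wt m) p k ↔ p.IsHomogeneous k :=
  forall_congr' fun μ => imp_congr_right fun hμ => by
    rw [weight_wt_eq_weight_one (hp μ (mem_support_iff.mpr hμ))]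

lemma noW_of_isWeightedHomogeneous_wt {P : S} {m k : ℕ}
    (hP : IsWeightedHomogeneous (wt m) P k) (hk : k < m) : noW P := by
  intro μ hμ
  have hweight := hP (mem_support_iff.mp hμ)
  rw [weight_wt_apply] at hweight
  by_contra hμ3
  have : m ≤ μ 3 * m := Nat.le_mul_of_pos_left m (Nat.pos_of_ne_zero hμ3)
  omega

lemma isWeightedHomogeneous_wt_w_pow (m d : ℕ) :
    IsWeightedHomogeneous (wt m) (w ^ d) (m * d) := by
  rw [mul_comm, ← smul_eq_mul]
  exact (isWeightedHomogeneous_X ℂ (wt m) 3).pow d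

theorem statement5_general (d m k : ℕ) (hd : 1 ≤ d) (hk : k < m)
    (f : S) (hf : noW f) (hfh : f.IsHomogeneous (m * d)) :
    (∀ g₁ g₂ : S, noW g₁ → g₁.IsHomogeneous k → noW g₂ → g₂.IsHomogeneous k →
      g₁ - g₂ ∈ Ideal.span {w ^ d + f} → g₁ = g₂) ∧
    (∀ P : S, IsWeightedHomogeneous (wt m) P k →
      ∃ g : S, noW g ∧ g.IsHomogeneous k ∧ P - g ∈ Ideal.span {w ^ d + f}) := by
  constructor
  · intro g₁ g₂ h₁ h₁k h₂ h₂k hmem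
    have hr : IsWeightedHomogeneous (wt m) (w ^ d + f) (m * d) :=
      (isWeightedHomogeneous_wt_w_pow m d).add (hf.isWeightedHomogeneous_wt_iff.mpr hfh)
    have hsub : IsWeightedHomogeneous (wt m) (g₁ - g₂) k :=
      (h₁.isWeightedHomogeneous_wt_iff.mpr h₁k).sub (h₂.isWeightedHomogeneous_wt_iff.mpr h₂k)
    have hkmd : k < m * d := hk.trans_le (Nat.le_mul_of_pos_right m hd)
    exact sub_eq_zero.mp (hsub.eq_zero_of_mem_span_singleton hr hkmd hmem)
  · intro P hP
    have hPw : noW P := noW_of_isWeightedHomogeneous_wt hP hk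
    exact ⟨P, hPw, hPw.isWeightedHomogeneous_wt_iff.mp hP, by simp⟩

/-- for 0 ≤ k < m, the map from homogeneous degree-k polynomials in
ℂ[x,y,z] to ℂ[x,y,z,w]/(w^d + f) is injective, and every weighted homogeneous P
of weighted degree k is congruent mod (w^d + f) to such a g. -/
theorem statement5 (d m k : ℕ) (hd : 1 ≤ d) (hm : 1 ≤ m) (hk : k < m)
    (f : S) (hf : noW f) (hfh : f.IsHomogeneous (m * d)) :
    (∀ g₁ g₂ : S, noW g₁ → g₁.IsHomogeneous k → noW g₂ → g₂.IsHomogeneous k →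
      g₁ - g₂ ∈ Ideal.span {w ^ d + f} → g₁ = g₂) ∧
    (∀ P : S, IsWeightedHomogeneous (wt m) P k →
      ∃ g : S, noW g ∧ g.IsHomogeneous k ∧ P - g ∈ Ideal.span {w ^ d + f}) :=
  statement5_general d m k hd hk f hf hfh
end
end
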